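/- arXiv:1709.05685 — 4 statements merged into one kernel-verified Lean document; each statement's English description precedes it below -/
import Mathlib

section
/- Let F be a field, t ≥ 2 and 1 ≤ r ≤ s integers. Then the length (F-vector space dimension) of the quotient ring F[y_1,...,y_s]/((y_1,...,y_r)^{t-1} + (y_2,...,y_s)^t) equals (s-r+1) * binomial(s+t-2, t-2). -/
/-!
Both summands are monomial ideals, so the monomials outside them form an `F`-basis of the
quotient, and the length is the number of exponents `x` with `x₁ + ⋯ + x_r ≤ t - 2` and
`x₂ + ⋯ + x_s ≤ t - 1`. Put `n = t - 2` and let the first condition run over `x₁, …, x_k`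
instead. For `k = s` these are the `C(s + n, n)` exponents of total degree `≤ n`, and passing
from `k + 1` to `k` adds the exponents with `x₁ + ⋯ + x_k ≤ n < x₁ + ⋯ + x_{k+1}`, which a change
of the two coordinates `x₁, x_{k+1}` matches with the exponents of total degree `≤ n` again.
-/

open MvPolynomial Finset

namespace Finsupp

variable {σ : Type*}

theorem exists_le_degree_eq_support_subset_iff (x : σ →₀ ℕ) (T : Finset σ) (n : ℕ) :
    (∃ g ≤ x, g.degree = n ∧ ↑g.support ⊆ (T : Set σ)) ↔ n ≤ ∑ i ∈ T, x i := by
  classical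
  constructor
  · rintro ⟨g, hgx, rfl, hgT⟩
    calc g.degree = ∑ i ∈ T, g i :=
          sum_subset (by exact_mod_cast hgT) fun i _ hi => notMem_support_iff.mp hi
      _ ≤ ∑ i ∈ T, x i := Finset.sum_le_sum fun i _ => hgx i
  · intro hn
    set y := x.filter (· ∈ T)
    have hyT : y.support ⊆ T := fun i hi => (Finset.mem_filter.mp hi).2
    have hdeg : y.degree = ∑ i ∈ T, x i := by
      rw [degree_apply, sum_subset hyT fun i _ hi => notMem_support_iff.mp hi]
      exact Finset.sum_congr rfl fun i hi => filter_apply_pos _ _ hi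
    obtain ⟨g, hgy, rfl⟩ := exists_le_degree_eq y n (hdeg ▸ hn)
    refine ⟨g, fun i => (hgy i).trans ?_, rfl, (support_mono hgy).trans (by exact_mod_cast hyT)⟩
    rw [filter_apply]
    split_ifs <;> simp

theorem ncard_degree_eq [Finite σ] (n : ℕ) :
    {x : σ →₀ ℕ | x.degree = n}.ncard = (Nat.card σ).multichoose n := by
  classical
  rw [← Nat.card_coe_set_eq, ← Sym.natCard_sym_eq_multichoose]
  exact Nat.card_congr (Sym.equivNatSum σ n).symm

theorem ncard_degree_le [Finite σ] (n : ℕ) :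
    {x : σ →₀ ℕ | x.degree ≤ n}.ncard = (Nat.card σ + n).choose n := by
  induction n with
  | zero => simpa using ncard_degree_eq (σ := σ) 0
  | succ n ih =>
    have hsplit : {x : σ →₀ ℕ | x.degree ≤ n + 1} =
        {x | x.degree ≤ n} ∪ {x | x.degree = n + 1} := by
      ext x; simp only [Set.mem_union, Set.mem_ofPred_eq]; omega
    rw [hsplit, Set.ncard_union_eq ?_ (finite_of_degree_le n) (finite_of_degree_eq _), ih,
      ncard_degree_eq, Nat.multichoose_eq, ← add_assoc, Nat.add_sub_cancel,
      Nat.choose_succ_succ' (Nat.card σ + n)]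
    exact Set.disjoint_left.mpr fun x h₁ h₂ => by
      simp only [Set.mem_ofPred_eq] at h₁ h₂; omega

section UpdatePair

variable {M : Type*} [Zero M] {z κ : σ}

noncomputable def updatePair (x : σ →₀ M) (z κ : σ) (a b : M) : σ →₀ M :=
  (x.update κ b).update z a

@[simp]
theorem updatePair_apply_left (x : σ →₀ M) (a b : M) : x.updatePair z κ a b z = a := by
  classical simp [updatePair]

theorem updatePair_apply_right (h : z ≠ κ) (x : σ →₀ M) (a b : M) :
    x.updatePair z κ a b κ = b := by
  classical simp [updatePair, h.symm]

theorem updatePair_updatePair (h : z ≠ κ) (x : σ →₀ M) (a b a' b' : M) :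
    (x.updatePair z κ a b).updatePair z κ a' b' = x.updatePair z κ a' b' := by
  simp only [updatePair]
  rw [update_comm _ h.symm, update_idem, update_comm _ h, update_idem]

@[simp]
theorem updatePair_self (x : σ →₀ M) : x.updatePair z κ (x z) (x κ) = x := by
  simp only [updatePair, update_self]

end UpdatePair

theorem sum_updatePair_of_notMem {M : Type*} [AddCommMonoid M] {z κ : σ} {s : Finset σ}
    (hz : z ∉ s) (hκ : κ ∉ s) (x : σ →₀ M) (a b : M) :
    ∑ i ∈ s, x.updatePair z κ a b i = ∑ i ∈ s, x i :=
  Finset.sum_congr rfl fun i hi => by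
    classical
    simp [updatePair, update_apply, ne_of_mem_of_not_mem hi hz, ne_of_mem_of_not_mem hi hκ]

end Finsupp

namespace MvPolynomial

variable {σ R : Type*} [CommRing R]

theorem ideal_span_X_image_pow_eq_span_monomial (T : Set σ) (n : ℕ) :
    Ideal.span (X '' T : Set (MvPolynomial σ R)) ^ n =
      Ideal.span ((monomial · 1) '' {x | x.degree = n ∧ ↑x.support ⊆ T}) := by
  rw [Ideal.span, Submodule.span_pow, Finsupp.image_pow_eq_finsuppProd_image]
  simp [monomial_eq]

theorem finrank_quotient_span_monomial [Nontrivial R] (G : Set (σ →₀ ℕ)) :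
    Module.finrank R (MvPolynomial σ R ⧸ Ideal.span ((monomial · (1 : R)) '' G)) =
      {x | ∀ g ∈ G, ¬ g ≤ x}.ncard := by
  set I := Ideal.span ((monomial · (1 : R)) '' G)
  set N := {x : σ →₀ ℕ | ∀ g ∈ G, ¬ g ≤ x}
  have hmem : ∀ {p : MvPolynomial σ R}, p ∈ I ↔ ∀ x ∈ p.support, ∃ g ∈ G, g ≤ x :=
    mem_ideal_span_monomial_image
  have hcompl : IsCompl (I.restrictScalars R) (restrictSupport R N) := by
    constructor
    · rw [Submodule.disjoint_def]
      intro p hpI hpN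
      by_contra hp
      obtain ⟨x, hx⟩ := support_nonempty.mpr hp
      obtain ⟨g, hg, hgx⟩ := hmem.mp hpI x hx
      exact hpN hx g hg hgx
    · rw [codisjoint_iff, eq_top_iff, ← restrictSupport_univ, ← Set.compl_union_self N,
        restrictSupport_eq_span, Set.image_union, Submodule.span_union]
      refine sup_le_sup (Submodule.span_le.mpr ?_) (restrictSupport_eq_span (R := R) N).ge
      rintro _ ⟨x, hx, rfl⟩
      simp only [N, Set.mem_compl_iff, Set.mem_ofPred_eq, not_forall, not_not] at hx
      obtain ⟨g, hg, hgx⟩ := hx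
      refine hmem.mpr fun y hy => ⟨g, hg, ?_⟩
      rwa [Finset.mem_singleton.mp (support_monomial_subset hy)]
  calc Module.finrank R (MvPolynomial σ R ⧸ I)
      = Module.finrank R (MvPolynomial σ R ⧸ I.restrictScalars R) :=
        (Submodule.Quotient.restrictScalarsEquiv R I).finrank_eq.symm
    _ = Module.finrank R (restrictSupport R N) :=
        (Submodule.quotientEquivOfIsCompl _ _ hcompl).finrank_eq
    _ = N.ncard := by
        rw [Module.finrank_eq_nat_card_basis (basisRestrictSupport R N), Nat.card_coe_set_eq]

theorem finrank_quotient_span_X_pow_add_span_X_pow [Nontrivial R] (T₁ T₂ : Finset σ)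
    (n₁ n₂ : ℕ) :
    Module.finrank R (MvPolynomial σ R ⧸
      (Ideal.span (X '' (T₁ : Set σ) : Set (MvPolynomial σ R)) ^ n₁ +
        Ideal.span (X '' (T₂ : Set σ) : Set (MvPolynomial σ R)) ^ n₂)) =
      {x : σ →₀ ℕ | ∑ i ∈ T₁, x i < n₁ ∧ ∑ i ∈ T₂, x i < n₂}.ncard := by
  rw [ideal_span_X_image_pow_eq_span_monomial, ideal_span_X_image_pow_eq_span_monomial,
    Submodule.add_eq_sup, ← Ideal.span_union, ← Set.image_union, finrank_quotient_span_monomial]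
  congr 1
  ext x
  simp only [← not_le, ← Finsupp.exists_le_degree_eq_support_subset_iff, Set.mem_union,
    Set.mem_ofPred_eq]
  grind

end MvPolynomial

section LowDegreeExponents

open Finsupp

variable {σ : Type*} [Fintype σ] [DecidableEq σ]

def lowDegreeExponents (z : σ) (A : Finset σ) (n : ℕ) : Set (σ →₀ ℕ) :=
  {x | ∑ i ∈ A, x i ≤ n ∧ ∑ i ∈ univ.erase z, x i ≤ n + 1}

theorem lowDegreeExponents_univ (z : σ) (n : ℕ) :
    lowDegreeExponents z univ n = {x | x.degree ≤ n} := by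
  ext x
  have := add_sum_erase univ x (mem_univ z)
  simp only [lowDegreeExponents, Set.mem_ofPred_eq, degree_eq_sum]
  omega

theorem lowDegreeExponents_finite {z : σ} {A : Finset σ} (hz : z ∈ A) (n : ℕ) :
    (lowDegreeExponents z A n).Finite := by
  refine (finite_of_degree_le (2 * n + 1)).subset fun x ⟨hA, hz'⟩ => ?_
  have := add_sum_erase univ x (mem_univ z)
  have := single_le_sum (f := fun i => x i) (fun _ _ => Nat.zero_le _) hz
  simp only [Set.mem_ofPred_eq, degree_eq_sum]
  omega

theorem lowDegreeExponents_insert_subset (z κ : σ) (A : Finset σ) (n : ℕ) :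
    lowDegreeExponents z (insert κ A) n ⊆ lowDegreeExponents z A n :=
  fun _ ⟨hA, hz⟩ => ⟨(sum_le_sum_of_subset (subset_insert κ A)).trans hA, hz⟩

theorem sum_blocks_of_mem_of_notMem {z κ : σ} {A : Finset σ} (hz : z ∈ A) (hκ : κ ∉ A)
    (x : σ →₀ ℕ) :
    ∑ i ∈ univ.erase z, x i = x κ + ∑ i ∈ A.erase z, x i + ∑ i ∈ (insert κ A)ᶜ, x i ∧
      x.degree = x z + x κ + ∑ i ∈ A.erase z, x i + ∑ i ∈ (insert κ A)ᶜ, x i := by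
  have h₁ := add_sum_erase A x hz
  have h₂ := add_sum_erase univ x (mem_univ z)
  have h₃ := sum_insert (f := fun i => x i) hκ
  have h₄ := sum_add_sum_compl (insert κ A) (fun i => x i)
  rw [degree_eq_sum]
  omega

/-- The bijection with `{x | x.degree ≤ n}` keeps all coordinates but `x z` and `x κ`, and
replaces these by the slacks `n + 1 - ∑_{i ≠ z} x i` and `∑_{i ∈ insert κ A} x i - (n + 1)`. -/
theorem ncard_lowDegreeExponents_diff_insert {z κ : σ} {A : Finset σ} (hz : z ∈ A) (hκ : κ ∉ A)
    (n : ℕ) :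
    (lowDegreeExponents z A n \ lowDegreeExponents z (insert κ A) n).ncard =
      (Nat.card σ + n).choose n := by
  have hzκ : z ≠ κ := ne_of_mem_of_not_mem hz hκ
  set M : (σ →₀ ℕ) → ℕ := fun x => ∑ i ∈ A.erase z, x i
  set T : (σ →₀ ℕ) → ℕ := fun x => ∑ i ∈ (insert κ A)ᶜ, x i
  have hsums (x : σ →₀ ℕ) : ∑ i ∈ univ.erase z, x i = x κ + M x + T x ∧
      x.degree = x z + x κ + M x + T x :=
    sum_blocks_of_mem_of_notMem hz hκ x
  have hA (x : σ →₀ ℕ) : ∑ i ∈ A, x i = x z + M x := (add_sum_erase A x hz).symm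
  have hinsert (x : σ →₀ ℕ) : ∑ i ∈ insert κ A, x i = x κ + (x z + M x) := by
    rw [sum_insert hκ, hA]
  have hM (x : σ →₀ ℕ) a b : M (x.updatePair z κ a b) = M x :=
    sum_updatePair_of_notMem (notMem_erase z A) (fun h => hκ (mem_of_mem_erase h)) ..
  have hT (x : σ →₀ ℕ) a b : T (x.updatePair z κ a b) = T x :=
    sum_updatePair_of_notMem (by simp [hz]) (by simp) ..
  set φ := fun x : σ →₀ ℕ =>
    x.updatePair z κ (n + 1 - (x κ + M x + T x)) (x z + M x + x κ - (n + 1))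
  set ψ := fun c : σ →₀ ℕ => c.updatePair z κ (c z + c κ + T c) (c κ + (n + 1) - c.degree)
  have hφ : ∀ x ∈ lowDegreeExponents z A n \ lowDegreeExponents z (insert κ A) n,
      (φ x).degree ≤ n ∧ ψ (φ x) = x := by
    intro x hx
    simp only [lowDegreeExponents, Set.mem_sdiff, Set.mem_ofPred_eq, hA, hinsert] at hx
    obtain ⟨hQ, hdeg⟩ := hsums x
    obtain ⟨-, hφdeg⟩ := hsums (φ x)
    simp only [φ, ψ, updatePair_updatePair hzκ, updatePair_apply_left,
      updatePair_apply_right hzκ, hM, hT] at hφdeg ⊢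
    refine ⟨by omega, ?_⟩
    convert updatePair_self x using 2 <;> omega
  have hψ : ∀ c : σ →₀ ℕ, c.degree ≤ n →
      ψ c ∈ lowDegreeExponents z A n \ lowDegreeExponents z (insert κ A) n ∧ φ (ψ c) = c := by
    intro c hc
    obtain ⟨hQ, hdeg⟩ := hsums c
    obtain ⟨hψQ, -⟩ := hsums (ψ c)
    simp only [lowDegreeExponents, Set.mem_sdiff, Set.mem_ofPred_eq, hA, hinsert, φ, ψ,
      updatePair_updatePair hzκ, updatePair_apply_left, updatePair_apply_right hzκ, hM,
      hT] at hψQ ⊢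
    refine ⟨by omega, ?_⟩
    convert updatePair_self c using 2 <;> omega
  rw [← ncard_degree_le]
  exact Set.BijOn.ncard_eq (f := φ) (Set.InvOn.bijOn (f' := ψ)
    ⟨fun x hx => (hφ x hx).2, fun c hc => (hψ c hc).2⟩ (fun x hx => (hφ x hx).1)
    fun c hc => (hψ c hc).1)

theorem ncard_lowDegreeExponents {z : σ} {A : Finset σ} (hz : z ∈ A) (n : ℕ) :
    (lowDegreeExponents z A n).ncard = (#Aᶜ + 1) * (Nat.card σ + n).choose n := by
  suffices h : ∀ B : Finset σ, z ∉ B →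
      (lowDegreeExponents z Bᶜ n).ncard = (#B + 1) * (Nat.card σ + n).choose n by
    simpa using h Aᶜ (by simpa using hz)
  intro B
  induction B using Finset.induction_on with
  | empty => simp [lowDegreeExponents_univ, ncard_degree_le]
  | @insert κ B hκB ih =>
    intro hz
    have hzA : z ∈ (insert κ B)ᶜ := mem_compl.mpr hz
    have hκA : κ ∉ (insert κ B)ᶜ := by simp
    have hBc : Bᶜ = insert κ (insert κ B)ᶜ := by ext a; by_cases h : a = κ <;> simp [h, hκB]
    rw [← Set.ncard_sdiff_add_ncard_of_subset (lowDegreeExponents_insert_subset z κ _ n)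
      (lowDegreeExponents_finite hzA n), ncard_lowDegreeExponents_diff_insert hzA hκA, ← hBc,
      ih (fun h => hz (mem_insert_of_mem h)), card_insert_of_notMem hκB]
    ring

end LowDegreeExponents

/-- Let `F` be a field, `t ≥ 2` and `1 ≤ r ≤ s`. Then the `F`-vector space dimension of
`F[y_1,...,y_s]/((y_1,...,y_r)^{t-1} + (y_2,...,y_s)^t)` equals
`(s-r+1) * binomial(s+t-2, t-2)`. -/
theorem length_quotient_powers (F : Type*) [Field F] (t r s : ℕ)
    (ht : 2 ≤ t) (hr : 1 ≤ r) (hrs : r ≤ s) :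
    Module.finrank F
      (MvPolynomial (Fin s) F ⧸
        ((Ideal.span {p : MvPolynomial (Fin s) F | ∃ i : Fin s, (i : ℕ) < r ∧ p = X i}) ^ (t - 1) +
         (Ideal.span {p : MvPolynomial (Fin s) F | ∃ i : Fin s, 1 ≤ (i : ℕ) ∧ p = X i}) ^ t)) =
      (s - r + 1) * Nat.choose (s + t - 2) (t - 2) := by
  set z : Fin s := ⟨0, by omega⟩
  set A : Finset (Fin s) := {i | (i : ℕ) < r}
  have hA : {p : MvPolynomial (Fin s) F | ∃ i : Fin s, (i : ℕ) < r ∧ p = X i} =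
      X '' (A : Set (Fin s)) := by
    ext; simp [A, eq_comm]
  have hB : {p : MvPolynomial (Fin s) F | ∃ i : Fin s, 1 ≤ (i : ℕ) ∧ p = X i} =
      X '' ((univ.erase z : Finset (Fin s)) : Set (Fin s)) := by
    ext; simp [z, Fin.ext_iff, Nat.one_le_iff_ne_zero, eq_comm]
  have hlow : {x : Fin s →₀ ℕ | ∑ i ∈ A, x i < t - 1 ∧ ∑ i ∈ univ.erase z, x i < t} =
      lowDegreeExponents z A (t - 2) := by
    ext x; simp only [lowDegreeExponents, Set.mem_ofPred_eq]; omega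
  rw [hA, hB, finrank_quotient_span_X_pow_add_span_X_pow, hlow,
    ncard_lowDegreeExponents (by simp [A, z]; omega), card_compl, Fin.card_filter_val_lt,
    Fintype.card_fin, Nat.card_fin, min_eq_right hrs, show s + (t - 2) = s + t - 2 by omega]
end

section
/- Let Y be an m×n matrix over a commutative ring with all t×t minors zero, and for a ≤ m, b ≤ n let Y(a,b) denote the submatrix with row indices ≤ a and column indices ≤ b, and I_{t-1}(Y(a,b)) the ideal generated by its (t-1)×(t-1) minors. Then for all a < m and b < n, I_{t-1}(Y(a,b+1)) · I_{t-1}(Y(a+1,b)) = I_{t-1}(Y(a,b)) · I_{t-1}(Y(a+1,b+1)). -/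
/-!
Write `[F|G]` for the minor of `Y` on rows `F` and columns `G`, and suppose that all
`(k+1)`-minors vanish. For `k`-minors `[f|g]`, `[f'|g']`, a row position `i₀` of `f'` and
`F = (f, f' i₀)`,
  `∑ᵢ (-1)^i [f' with row i₀ replaced by F i | g'] · [F without F i | g] = 0`:
in its varying row the first factor is a linear combination of columns `c` of `Y`, and for each
`c` the sum is, up to sign, the vanishing minor `[F|(g, c)]` expanded along its last column.
The last term is `±[f'|g'] · [f|g]`, and in every other term the row `f' i₀` has moved into the
second minor. Hence if the row sets `A ⊆ A'` differ by at most one row, then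
`I(A, C) · I(A', D) ⊆ I(A, D) · I(A', C)` for all column sets `C`, `D`, so equality holds by
symmetry; the theorem is the case `A = [0,a)`, `A' = [0,a]`, `C = [0,b]`, `D = [0,b)`.
-/

namespace Matrix

variable {R m n : Type*} [CommRing R] (Y : Matrix m n R) {k : ℕ}

theorem det_submatrix_update_eq_sum (f : Fin (k + 1) → m) (g : Fin (k + 1) → n)
    (i₀ : Fin (k + 1)) (r : m) :
    (Y.submatrix (Function.update f i₀ r) g).det =
      ∑ q : Fin (k + 1), (-1) ^ (i₀ + q : ℕ) * Y r (g q) *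
        (Y.submatrix (f ∘ i₀.succAbove) (g ∘ q.succAbove)).det := by
  rw [det_succ_row _ i₀]
  refine Finset.sum_congr rfl fun q _ => ?_
  rw [submatrix_apply, Function.update_self, submatrix_submatrix,
    Function.update_comp_eq_of_forall_ne _ _ i₀.succAbove_ne]

variable {Y}

theorem sum_mul_det_submatrix_succAbove_eq_zero
    (hY : ∀ f g : Fin (k + 2) → _, (Y.submatrix f g).det = 0)
    (F : Fin (k + 2) → m) (g : Fin (k + 1) → n) (c : n) :
    ∑ i : Fin (k + 2), (-1) ^ (i : ℕ) * Y (F i) c *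
      (Y.submatrix (F ∘ i.succAbove) g).det = 0 := by
  have h : (-1) ^ (k + 1) * ∑ i : Fin (k + 2),
      (-1) ^ (i : ℕ) * Y (F i) c * (Y.submatrix (F ∘ i.succAbove) g).det = 0 := by
    rw [Finset.mul_sum, ← hY F (Fin.snoc g c), det_succ_column _ (Fin.last _)]
    refine Finset.sum_congr rfl fun i _ => ?_
    rw [submatrix_apply, Fin.snoc_last, submatrix_submatrix, Fin.succAbove_last,
      Fin.snoc_comp_castSucc, Fin.val_last, pow_add]
    ring
  exact (isUnit_neg_one.pow _).mul_right_eq_zero.1 h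

theorem sum_det_submatrix_update_mul_det_eq_zero
    (hY : ∀ f g : Fin (k + 2) → _, (Y.submatrix f g).det = 0)
    (F : Fin (k + 2) → m) (g : Fin (k + 1) → n)
    (f' : Fin (k + 1) → m) (g' : Fin (k + 1) → n) (i₀ : Fin (k + 1)) :
    ∑ i : Fin (k + 2), (-1) ^ (i : ℕ) * (Y.submatrix (Function.update f' i₀ (F i)) g').det *
      (Y.submatrix (F ∘ i.succAbove) g).det = 0 := by
  simp only [det_submatrix_update_eq_sum, Finset.mul_sum, Finset.sum_mul]
  rw [Finset.sum_comm]
  refine Finset.sum_eq_zero fun q _ => ?_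
  rw [← mul_zero ((-1 : R) ^ (i₀ + q : ℕ) *
      (Y.submatrix (f' ∘ i₀.succAbove) (g' ∘ q.succAbove)).det),
    ← sum_mul_det_submatrix_succAbove_eq_zero hY F g (g' q), Finset.mul_sum]
  exact Finset.sum_congr rfl fun i _ => by ring

def minorIdeal (k : ℕ) (A : Set m) (C : Set n) : Ideal R :=
  Ideal.span {x | ∃ (f : Fin k → m) (g : Fin k → n),
    (∀ i, f i ∈ A) ∧ (∀ j, g j ∈ C) ∧ x = (Y.submatrix f g).det}

variable {A A' : Set m} {C D : Set n}

theorem det_mem_minorIdeal {f : Fin k → m} {g : Fin k → n} (hf : ∀ i, f i ∈ A)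
    (hg : ∀ j, g j ∈ C) : (Y.submatrix f g).det ∈ Y.minorIdeal k A C :=
  Ideal.subset_span ⟨f, g, hf, hg, rfl⟩

theorem det_mul_det_mem_minorIdeal_mul
    (hY : ∀ f g : Fin (k + 1) → _, (Y.submatrix f g).det = 0)
    (hAA' : A ⊆ A') (hA' : (A' \ A).Subsingleton)
    {f f' : Fin k → m} {g g' : Fin k → n} (hf : ∀ i, f i ∈ A) (hg : ∀ j, g j ∈ C)
    (hf' : ∀ i, f' i ∈ A') (hg' : ∀ j, g' j ∈ D) :
    (Y.submatrix f g).det * (Y.submatrix f' g').det ∈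
      Y.minorIdeal k A D * Y.minorIdeal k A' C := by
  by_cases hf'A : ∀ i, f' i ∈ A
  · rw [mul_comm (Y.submatrix f g).det]
    exact Ideal.mul_mem_mul (det_mem_minorIdeal hf'A hg')
      (det_mem_minorIdeal (fun i => hAA' (hf i)) hg)
  push Not at hf'A
  obtain ⟨i₀, hi₀⟩ := hf'A
  obtain ⟨k, rfl⟩ := Nat.exists_eq_add_one.2 i₀.pos
  by_cases hrep : ∃ j ≠ i₀, f' j ∉ A
  · obtain ⟨j, hj, hjA⟩ := hrep
    have hrow : f' j = f' i₀ := hA' ⟨hf' j, hjA⟩ ⟨hf' i₀, hi₀⟩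
    rw [det_zero_of_row_eq (M := Y.submatrix f' g') hj (by ext; simp [hrow]), mul_zero]
    exact Ideal.zero_mem _
  push Not at hrep
  have key := sum_det_submatrix_update_mul_det_eq_zero hY (Fin.snoc f (f' i₀)) g f' g' i₀
  rw [Fin.sum_univ_castSucc] at key
  simp only [Fin.snoc_castSucc, Fin.snoc_last, Fin.succAbove_last, Fin.snoc_comp_castSucc,
    Function.update_eq_self] at key
  have hrows : ∀ i j, Function.update f' i₀ (f i) j ∈ A := fun i j => by
    rcases eq_or_ne j i₀ with rfl | hj
    · simpa using hf i
    · simpa [hj] using hrep j hj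
  have hrows' : ∀ j, (Fin.snoc f (f' i₀) : Fin (k + 2) → m) j ∈ A' :=
    Fin.lastCases (by simpa using hf' i₀) fun j => by simpa using hAA' (hf j)
  rw [mul_comm (Y.submatrix f g).det,
    ← Ideal.unit_mul_mem_iff_mem _ (isUnit_neg_one.pow (Fin.last (k + 1) : ℕ)), ← mul_assoc,
    eq_neg_of_add_eq_zero_right key]
  exact neg_mem <| Ideal.sum_mem _ fun i _ => Ideal.mul_mem_mul
    (Ideal.mul_mem_left _ _ (det_mem_minorIdeal (hrows i) hg'))
    (det_mem_minorIdeal (fun j => hrows' _) hg)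

theorem minorIdeal_mul_le (hY : ∀ f g : Fin (k + 1) → _, (Y.submatrix f g).det = 0)
    (hAA' : A ⊆ A') (hA' : (A' \ A).Subsingleton) :
    Y.minorIdeal k A C * Y.minorIdeal k A' D ≤ Y.minorIdeal k A D * Y.minorIdeal k A' C := by
  rw [minorIdeal, minorIdeal, Ideal.span_mul_span', Ideal.span_le]
  rintro _ ⟨_, ⟨f, g, hf, hg, rfl⟩, _, ⟨f', g', hf', hg', rfl⟩, rfl⟩
  exact det_mul_det_mem_minorIdeal_mul hY hAA' hA' hf hg hf' hg'

theorem minorIdeal_mul_swap_cols (hY : ∀ f g : Fin (k + 1) → _, (Y.submatrix f g).det = 0)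
    (hAA' : A ⊆ A') (hA' : (A' \ A).Subsingleton) :
    Y.minorIdeal k A C * Y.minorIdeal k A' D = Y.minorIdeal k A D * Y.minorIdeal k A' C :=
  (minorIdeal_mul_le hY hAA' hA').antisymm (minorIdeal_mul_le hY hAA' hA')

end Matrix

open Matrix

theorem minor_ideal_exchange_general {R : Type*} [CommRing R] {m n t : ℕ}
    (Y : Matrix (Fin m) (Fin n) R)
    (hY : ∀ (f : Fin t → Fin m) (g : Fin t → Fin n), (Y.submatrix f g).det = 0)
    (I : ℕ → ℕ → Ideal R)
    (hI : ∀ a b, I a b = Ideal.span {x : R |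
      ∃ (f : Fin (t - 1) → Fin m) (g : Fin (t - 1) → Fin n),
        (∀ i, (f i : ℕ) < a) ∧ (∀ j, (g j : ℕ) < b) ∧ x = (Y.submatrix f g).det})
    (a b : ℕ) :
    I a (b + 1) * I (a + 1) b = I a b * I (a + 1) (b + 1) := by
  -- `t - 1` truncates: for `t = 0` the hypothesis `hY` says that `1 = 0` in `R`.
  have hY' : ∀ f g : Fin (t - 1 + 1) → _, (Y.submatrix f g).det = 0 := by
    rcases t with _ | t
    · have : Subsingleton R :=
        subsingleton_of_zero_eq_one (by simpa using (hY Fin.elim0 Fin.elim0).symm)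
      exact fun _ _ => Subsingleton.elim _ _
    · exact hY
  have hI' : ∀ a b, I a b = Y.minorIdeal (t - 1) {i | (i : ℕ) < a} {j | (j : ℕ) < b} := hI
  simp only [hI']
  refine minorIdeal_mul_swap_cols hY' (fun i (hi : (i : ℕ) < a) => hi.trans a.lt_succ_self) ?_
  rintro i ⟨hi, hia⟩ j ⟨hj, hja⟩
  simp only [Set.mem_ofPred] at hi hia hj hja
  omega

/-- For an `m×n` matrix `Y` with all `t×t` minors zero, writing `I_{t-1}(Y(a,b))` for the ideal
generated by the `(t-1)`-minors of the top-left `a×b` submatrix, one has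
`I_{t-1}(Y(a,b+1)) · I_{t-1}(Y(a+1,b)) = I_{t-1}(Y(a,b)) · I_{t-1}(Y(a+1,b+1))`
for all `a < m`, `b < n`. -/
theorem minor_ideal_exchange {R : Type*} [CommRing R] {m n t : ℕ}
    (Y : Matrix (Fin m) (Fin n) R)
    (hY : ∀ (f : Fin t → Fin m) (g : Fin t → Fin n), (Y.submatrix f g).det = 0)
    (I : ℕ → ℕ → Ideal R)
    (hI : ∀ a b, I a b = Ideal.span {x : R |
      ∃ (f : Fin (t - 1) → Fin m) (g : Fin (t - 1) → Fin n),
        (∀ i, (f i : ℕ) < a) ∧ (∀ j, (g j : ℕ) < b) ∧ x = (Y.submatrix f g).det})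
    (a b : ℕ) (ha : a < m) (hb : b < n) :
    I a (b + 1) * I (a + 1) b = I a b * I (a + 1) (b + 1) :=
  minor_ideal_exchange_general Y hY I hI a b
end

section
/- Let F be a field, u_1,...,u_{t-1},v_1,...,v_{t-1} indeterminates, and n ≥ t. Define h_i = Σ_{j=1}^{t-1} u_j^{n+t-2-i} v_j^i for 0 ≤ i ≤ n+t-2, and let M be the t×n matrix with entries M_{a,b} = h_{a+b-2}. Then every t×t minor of M is zero. -/
open MvPolynomial Matrix

/-- With `h i = Σ_j u_j^{n+t-2-i} v_j^i` in `F[u_1,...,u_{t-1},v_1,...,v_{t-1}]`, every `t×t`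
minor of the `t×n` Hankel-type matrix `M` with `M_{a,b} = h (a+b)` vanishes. -/
theorem hankel_secant_minors_vanish (F : Type*) [Field F] (t n : ℕ) (ht : 2 ≤ t) (htn : t ≤ n)
    (h : ℕ → MvPolynomial (Fin (t - 1) ⊕ Fin (t - 1)) F)
    (hh : ∀ i ≤ n + t - 2, h i = ∑ j : Fin (t - 1),
      (X (Sum.inl j)) ^ (n + t - 2 - i) * (X (Sum.inr j)) ^ i)
    (M : Matrix (Fin t) (Fin n) (MvPolynomial (Fin (t - 1) ⊕ Fin (t - 1)) F))
    (hM : ∀ a b, M a b = h ((a : ℕ) + (b : ℕ)))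
    (g : Fin t → Fin n) :
    (M.submatrix id g).det = 0 := by
  set A : Matrix (Fin t) (Fin t) (MvPolynomial (Fin (t - 1) ⊕ Fin (t - 1)) F) := fun a j =>
    if hj : (j : ℕ) < t - 1 then
      (X (Sum.inl ⟨j, hj⟩)) ^ (t - 1 - (a : ℕ)) * (X (Sum.inr ⟨j, hj⟩)) ^ (a : ℕ)
    else 0 with hA
  set B : Matrix (Fin t) (Fin t) (MvPolynomial (Fin (t - 1) ⊕ Fin (t - 1)) F) := fun j b =>
    if hj : (j : ℕ) < t - 1 then
      (X (Sum.inl ⟨j, hj⟩)) ^ (n - 1 - (g b : ℕ)) * (X (Sum.inr ⟨j, hj⟩)) ^ (g b : ℕ)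
    else 0 with hB
  have hfac : M.submatrix id g = A * B := by
    rw [← Matrix.ext_iff]
    intro a b
    have hab : (a : ℕ) + (g b : ℕ) ≤ n + t - 2 := by
      have := a.isLt; have := (g b).isLt; omega
    simp only [Matrix.submatrix_apply, id_eq, hM, hh _ hab, Matrix.mul_apply]
    set emb : Fin (t - 1) ↪ Fin t := (Fin.castLEEmb (by omega)) with hemb
    rw [show (Finset.univ : Finset (Fin t)) =
        (Finset.univ.map emb) ∪ (Finset.univ.map emb)ᶜ by
      simp [Finset.union_compl]]
    rw [Finset.sum_union (disjoint_compl_right)]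
    have hz : ∀ j ∈ (Finset.univ.map emb)ᶜ, A a j * B j b = 0 := by
      intro j hj
      have hjn : ¬ ((j : ℕ) < t - 1) := by
        intro hlt
        have : j ∈ Finset.univ.map emb := by
          refine Finset.mem_map.mpr ⟨⟨(j : ℕ), hlt⟩, Finset.mem_univ _, ?_⟩
          simp [hemb, Fin.ext_iff]
        exact (Finset.mem_compl.mp hj) this
      simp [hA, hB, dif_neg hjn]
    rw [Finset.sum_eq_zero hz, add_zero, Finset.sum_map]
    apply Finset.sum_congr rfl
    intro j _
    have hjlt : ((emb j : Fin t) : ℕ) < t - 1 := by simp [hemb]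
    simp only [hA, hB, dif_pos hjlt]
    have hcoe : (⟨((emb j : Fin t) : ℕ), hjlt⟩ : Fin (t - 1)) = j := by
      simp [hemb, Fin.ext_iff]
    rw [hcoe]
    rw [mul_mul_mul_comm, ← pow_add, ← pow_add]
    congr 2
    have := a.isLt; have := (g b).isLt; omega
  rw [hfac, Matrix.det_mul]
  have hcol : A.det = 0 := by
    apply Matrix.det_eq_zero_of_column_eq_zero ⟨t - 1, by omega⟩
    intro i
    simp only [hA]
    rw [dif_neg]
    simp
  rw [hcol, zero_mul]
end

section
/- Let F be a field of characteristic p ≥ t, t ≥ 2, n ≥ t, and identify the Hankel determinantal ring R with the F-subalgebra of S = F[u_1,...,u_{t-1},v_1,...,v_{t-1}] generated by h_i = Σ_j u_j^{n+t-2-i} v_j^i, 0 ≤ i ≤ n+t-2. If a linear combination r = Σ λ_{i_1...i_{t-1}} h_{i_1}···h_{i_{t-1}} over indices t-1 ≤ i_1 ≤ ... ≤ i_{t-1} ≤ n-1 lies in the ideal (u_1^n,...,u_{t-1}^n, v_1^n,...,v_{t-1}^n)S, then all coefficients λ_{i_1...i_{t-1}} are zero. -/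
/-!
Expanding the product, `h_{k_1} ⋯ h_{k_{t-1}}` is the sum, over all maps `σ` of the index set to
itself, of the monomials `∏ᵢ u_{σ i}^{a - kᵢ} v_{σ i}^{kᵢ}` (`a = n + t - 2`). Fix a monotone `m` in the
allowed range and look at the monomial `d = ∏ⱼ u_j^{a - mⱼ} v_j^{mⱼ}`: all its exponents are `< n`, so
its coefficient in any element of the monomial ideal is zero. Since every `u_j v_j`-block of `d` has
degree `a`, the maps `σ` producing `d` from `k` are permutations with `m ∘ σ = k`; for monotone `k`
this forces `k = m`. Hence the coefficient of `d` in `r` is `λ_m` times the order of the stabiliser of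
`m` in `S_{t-1}`, a product of factorials of numbers `< t ≤ p`, which is invertible in `F`.
-/

open MvPolynomial

theorem MvPolynomial.coeff_eq_zero_of_mem_span_X_pow {σ R : Type*} [CommSemiring R] {n : ℕ}
    {x : MvPolynomial σ R} (hx : x ∈ Ideal.span (Set.range fun v => X v ^ n))
    {d : σ →₀ ℕ} (hd : ∀ v, d v < n) : coeff d x = 0 := by
  have hgen : Set.range (fun v => (X v ^ n : MvPolynomial σ R)) =
      (fun s => monomial s 1) '' Set.range fun v => Finsupp.single v n := by
    rw [← Set.range_comp]
    simp [Function.comp_def, X_pow_eq_monomial]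
  rw [hgen, mem_ideal_span_monomial_image] at hx
  by_contra h
  obtain ⟨_, ⟨v, rfl⟩, hv⟩ := hx d (mem_support_iff.mpr h)
  exact (hd v).not_ge (by simpa using hv v)

theorem eq_of_monotone_of_comp_perm_eq {α : Type*} [PartialOrder α] {s : ℕ} {m k : Fin s → α}
    (hm : Monotone m) (hk : Monotone k) {e : Equiv.Perm (Fin s)} (h : m ∘ e = k) : m = k := by
  subst h
  simpa using (Tuple.unique_monotone (σ := e) (τ := 1) hk (by simpa using hm)).symm

section Hankel

open Finset Equiv

variable {ι : Type*} [Fintype ι] [DecidableEq ι]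

theorem natCast_card_stabilizer_ne_zero {R α : Type*} [CommRing R] [IsDomain R] (p : ℕ)
    [CharP R p] (hp : p.Prime) [DecidableEq α] (m : ι → α) (hι : Fintype.card ι < p) :
    ((#{e : Perm ι | m ∘ e = m} : ℕ) : R) ≠ 0 := by
  rw [← Fintype.card_subtype, DomMulAct.stabilizer_card', Nat.cast_prod, prod_ne_zero_iff]
  intro x _
  rw [Ne, CharP.cast_eq_zero_iff R p, hp.dvd_factorial, not_le]
  exact (Fintype.card_subtype_le _).trans_lt hι

/-- The Hankel generator `h_i = ∑ⱼ u_j ^ (a - i) * v_j ^ i`, with `u = X ∘ Sum.inl` and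
`v = X ∘ Sum.inr`. -/
noncomputable def hankelPowerSum (R : Type*) [CommSemiring R] (a i : ℕ) :
    MvPolynomial (ι ⊕ ι) R :=
  ∑ j, X (Sum.inl j) ^ (a - i) * X (Sum.inr j) ^ i

/-- The exponent of `∏ᵢ u_{σ i} ^ (a - k i) * v_{σ i} ^ (k i)`. -/
noncomputable def hankelExponent (a : ℕ) (k : ι → ℕ) (σ : ι → ι) : ι ⊕ ι →₀ ℕ :=
  ∑ i, (Finsupp.single (Sum.inl (σ i)) (a - k i) + Finsupp.single (Sum.inr (σ i)) (k i))

theorem prod_hankelPowerSum (R : Type*) [CommSemiring R] (a : ℕ) (k : ι → ℕ) :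
    ∏ i, hankelPowerSum R a (k i) = ∑ σ : ι → ι, monomial (hankelExponent a k σ) 1 := by
  simp_rw [hankelPowerSum, X_pow_eq_monomial, monomial_mul, one_mul, prod_univ_sum,
    Fintype.piFinset_univ, hankelExponent, monomial_sum_one]

theorem coeff_prod_hankelPowerSum (R : Type*) [CommSemiring R] (a : ℕ) (k : ι → ℕ)
    (d : ι ⊕ ι →₀ ℕ) :
    coeff d (∏ i, hankelPowerSum R a (k i)) = #{σ | hankelExponent a k σ = d} := by
  rw [prod_hankelPowerSum, coeff_sum]
  simp only [coeff_monomial]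
  exact sum_boole _ _

variable {a : ℕ} {k m : ι → ℕ}

theorem hankelExponent_inl (σ : ι → ι) (j : ι) :
    hankelExponent a k σ (Sum.inl j) = ∑ i with σ i = j, (a - k i) := by
  simp only [hankelExponent, Finsupp.coe_finsetSum, Finset.sum_apply, Finsupp.coe_add,
    Pi.add_apply, Finsupp.single_apply, Sum.inl.injEq, reduceCtorEq, if_false, add_zero,
    sum_filter]

theorem hankelExponent_inr (σ : ι → ι) (j : ι) :
    hankelExponent a k σ (Sum.inr j) = ∑ i with σ i = j, k i := by
  simp only [hankelExponent, Finsupp.coe_finsetSum, Finset.sum_apply, Finsupp.coe_add,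
    Pi.add_apply, Finsupp.single_apply, Sum.inr.injEq, reduceCtorEq, if_false, zero_add,
    sum_filter]

theorem hankelExponent_inl_add_inr (hk : ∀ i, k i ≤ a) (σ : ι → ι) (j : ι) :
    hankelExponent a k σ (Sum.inl j) + hankelExponent a k σ (Sum.inr j) = #{i | σ i = j} * a := by
  rw [hankelExponent_inl, hankelExponent_inr, ← sum_add_distrib,
    sum_const_nat fun i _ => Nat.sub_add_cancel (hk i)]

theorem hankelExponent_perm_inl (e : Perm ι) (j : ι) :
    hankelExponent a k e (Sum.inl j) = a - k (e.symm j) := by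
  simp [hankelExponent_inl, ← eq_symm_apply, filter_eq']

theorem hankelExponent_perm_inr (e : Perm ι) (j : ι) :
    hankelExponent a k e (Sum.inr j) = k (e.symm j) := by
  simp [hankelExponent_inr, ← eq_symm_apply, filter_eq']

omit [DecidableEq ι] in
theorem hankelExponent_id_inl (j : ι) : hankelExponent a k id (Sum.inl j) = a - k j := by
  classical exact hankelExponent_perm_inl (Equiv.refl ι) j

omit [DecidableEq ι] in
theorem hankelExponent_id_inr (j : ι) : hankelExponent a k id (Sum.inr j) = k j := by
  classical exact hankelExponent_perm_inr (Equiv.refl ι) j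

omit [DecidableEq ι] in
theorem hankelExponent_eq_iff (ha : 0 < a) (hk : ∀ i, k i ≤ a) (hm : ∀ i, m i ≤ a)
    {σ : ι → ι} :
    hankelExponent a k σ = hankelExponent a m id ↔ ∃ e : Perm ι, ⇑e = σ ∧ m ∘ e = k := by
  classical
  constructor
  · intro h
    -- each `u_j v_j`-block of the right side has degree `a`, so every fibre of `σ` is a point
    have hsurj : Function.Surjective σ := fun j => by
      have hfib := hankelExponent_inl_add_inr hk σ j
      rw [h, hankelExponent_id_inl, hankelExponent_id_inr, Nat.sub_add_cancel (hm _)] at hfib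
      have hone : #{i | σ i = j} = 1 :=
        Nat.eq_of_mul_eq_mul_right ha (by rw [one_mul]; exact hfib.symm)
      obtain ⟨i, hi⟩ := card_pos.mp (hone ▸ Nat.one_pos)
      exact ⟨i, (mem_filter.mp hi).2⟩
    set e := Equiv.ofBijective σ (Finite.surjective_iff_bijective.mp hsurj)
    refine ⟨e, rfl, funext fun i => ?_⟩
    have hv := congr($h (Sum.inr (e i)))
    rw [show σ = ⇑e from rfl, hankelExponent_perm_inr, hankelExponent_id_inr] at hv
    simpa using hv.symm
  · rintro ⟨e, rfl, rfl⟩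
    ext (j | j) <;> simp [hankelExponent_perm_inl, hankelExponent_perm_inr, hankelExponent_id_inl,
      hankelExponent_id_inr]

theorem card_hankelExponent_eq (ha : 0 < a) (hk : ∀ i, k i ≤ a) (hm : ∀ i, m i ≤ a) :
    #{σ : ι → ι | hankelExponent a k σ = hankelExponent a m id} = #{e : Perm ι | m ∘ e = k} := by
  rw [← card_map ⟨((⇑) : Perm ι → ι → ι), DFunLike.coe_injective⟩]
  congr 1
  ext σ
  simp [hankelExponent_eq_iff ha hk hm, and_comm]

theorem coeff_sum_C_mul_prod_hankelPowerSum {R : Type*} [CommSemiring R] {s n a : ℕ}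
    (ha : 0 < a) (hna : n ≤ a) (lam : (Fin s → Fin n) → R) (hlam : ∀ k, lam k ≠ 0 → Monotone k)
    {m : Fin s → Fin n} (hm : Monotone m) :
    coeff (hankelExponent a (Fin.val ∘ m) id)
        (∑ k, C (lam k) * ∏ i, hankelPowerSum R a (k i : ℕ)) =
      lam m * #{e : Perm (Fin s) | (Fin.val ∘ m) ∘ e = Fin.val ∘ m} := by
  have hka (k : Fin s → Fin n) : ∀ i, (Fin.val ∘ k) i ≤ a := fun i => (k i).isLt.le.trans hna
  have hterm (k : Fin s → Fin n) :
      coeff (hankelExponent a (Fin.val ∘ m) id) (C (lam k) * ∏ i, hankelPowerSum R a (k i : ℕ)) =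
        lam k * #{e : Perm (Fin s) | (Fin.val ∘ m) ∘ e = Fin.val ∘ k} := by
    rw [coeff_C_mul, ← card_hankelExponent_eq ha (hka k) (hka m)]
    exact congrArg _ (coeff_prod_hankelPowerSum R a (Fin.val ∘ k) _)
  rw [coeff_sum, sum_eq_single m (fun k _ hkm => ?_) (by simp), hterm]
  by_cases hk : lam k = 0
  · rw [hterm, hk, zero_mul]
  rw [hterm, card_eq_zero.mpr (filter_eq_empty_iff.mpr fun e _ he => hkm ?_), Nat.cast_zero,
    mul_zero]
  exact (eq_of_monotone_of_comp_perm_eq hm (hlam k hk) (Fin.val_injective.comp_left he)).symm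

end Hankel

/-- Char `p ≥ t` socle computation: if a linear combination
`r = Σ λ_{i_1...i_{t-1}} h_{i_1}···h_{i_{t-1}}` over monotone index tuples with
`t-1 ≤ i_1 ≤ ... ≤ i_{t-1} ≤ n-1` lies in `(u_1^n,...,u_{t-1}^n,v_1^n,...,v_{t-1}^n)S`, then
all coefficients vanish. -/
theorem hankel_socle_coefficients (F : Type*) [Field F] (p t n : ℕ) [CharP F p]
    (hp : p.Prime) (hpt : t ≤ p) (ht : 2 ≤ t) (htn : t ≤ n)
    (h : ℕ → MvPolynomial (Fin (t - 1) ⊕ Fin (t - 1)) F)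
    (hh : ∀ i ≤ n + t - 2, h i = ∑ j : Fin (t - 1),
      (X (Sum.inl j)) ^ (n + t - 2 - i) * (X (Sum.inr j)) ^ i)
    (lam : ((Fin (t - 1)) → Fin n) → F)
    (hsupp : ∀ k : Fin (t - 1) → Fin n,
      ¬ (Monotone k ∧ ∀ i, t - 1 ≤ (k i : ℕ) ∧ (k i : ℕ) ≤ n - 1) → lam k = 0)
    (r : MvPolynomial (Fin (t - 1) ⊕ Fin (t - 1)) F)
    (hr : r = ∑ k : Fin (t - 1) → Fin n, C (lam k) * ∏ i : Fin (t - 1), h (k i))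
    (hmem : r ∈ Ideal.span {q : MvPolynomial (Fin (t - 1) ⊕ Fin (t - 1)) F |
      ∃ j : Fin (t - 1), q = X (Sum.inl j) ^ n ∨ q = X (Sum.inr j) ^ n}) :
    ∀ k, lam k = 0 := by
  intro m
  by_cases hm : Monotone m ∧ ∀ i, t - 1 ≤ (m i : ℕ) ∧ (m i : ℕ) ≤ n - 1
  swap
  · exact hsupp m hm
  set a := n + t - 2
  have hr' : r = ∑ k, C (lam k) * ∏ i, hankelPowerSum F a (k i : ℕ) :=
    hr.trans <| Finset.sum_congr rfl fun k _ =>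
      congrArg _ <| Finset.prod_congr rfl fun i _ => hh _ (by have := (k i).isLt; omega)
  have hspan : {q : MvPolynomial (Fin (t - 1) ⊕ Fin (t - 1)) F |
      ∃ j : Fin (t - 1), q = X (Sum.inl j) ^ n ∨ q = X (Sum.inr j) ^ n} =
      Set.range fun v => X v ^ n := by
    ext q
    simp [Sum.exists, eq_comm, exists_or]
  have hd (v) : hankelExponent a (Fin.val ∘ m) id v < n := by
    rcases v with j | j
    all_goals
      have := hm.2 j
      simp only [hankelExponent_id_inl, hankelExponent_id_inr, Function.comp_apply]
      omega
  have hcoeff := coeff_sum_C_mul_prod_hankelPowerSum (a := a) (by omega) (by omega) lam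
    (fun k hk => (not_not.mp (mt (hsupp k) hk)).1) hm.1
  rw [← hr', coeff_eq_zero_of_mem_span_X_pow (hspan ▸ hmem) hd] at hcoeff
  exact (mul_eq_zero.mp hcoeff.symm).resolve_right
    (natCast_card_stabilizer_ne_zero p hp _ (by simp only [Fintype.card_fin]; omega))
end
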